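/- Let ω = (ω₀, ω_{j,k,σ}) ∈ ℂ^{1+dS} satisfy ω₀ + ∑_{j,k,σ} ω_{j,k,σ} f^(σ)(α_j q^k) = 0. Then for every integer n ≥ 0 the series ∑_{l=n+1}^∞ u_l(ω) / ∏_{k=n+1}^l P(q^k) converges absolutely and v_n(ω) = − ∑_{l=n+1}^∞ u_l(ω) / ∏_{k=n+1}^l P(q^k). -/

import Mathlib

open scoped BigOperators Classical
open Finset

noncomputable section

/-- The value `P(q^n)` viewed as a complex number. -/
def Pq (q : ℚ) (P : Polynomial ℚ) (n : ℕ) : ℂ := ((P.eval (q ^ n) : ℚ) : ℂ)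

/-- The product `∏_{k=1}^n P(q^k)`. -/
def prodP (q : ℚ) (P : Polynomial ℚ) (n : ℕ) : ℂ := ∏ k ∈ Finset.range n, Pq q P (k + 1)

/-- The entire function `f(z) = ∑_{n≥0} zⁿ / ∏_{k=1}^n P(q^k)`. -/
def fC (q : ℚ) (P : Polynomial ℚ) : ℂ → ℂ := fun z => ∑' n : ℕ, z ^ n / prodP q P n

/-- The linear form `u_n(x) = ∑_{j,k,σ} σ!·binom(n,σ)·(α_j q^k)^{n−σ} x_{j,k,σ}`, where
`σ!·binom(n,σ)` is written as the falling factorial `∏_{i<σ} (n−i)` (valid for all `n ∈ ℤ`). -/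
def useq (q : ℚ) {m : ℕ} (d : ℕ) (α : Fin m → ℂ) (s : Fin m → ℕ)
    (x : Fin m → Fin d → ℕ → ℂ) (n : ℤ) : ℂ :=
  ∑ j : Fin m, ∑ k : Fin d, ∑ σ ∈ Finset.range (s j),
    (∏ i ∈ Finset.range σ, ((n : ℂ) - (i : ℂ))) *
      (α j * (q : ℂ) ^ (k : ℕ)) ^ (n - (σ : ℤ)) * x j k σ

/-- The linear form `v_n(x) = x₀ ∏_{k=1}^n P(q^k) + ∑_{l=0}^n u_l(x) ∏_{k=l+1}^n P(q^k)`. -/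
def vseq (q : ℚ) (P : Polynomial ℚ) {m : ℕ} (d : ℕ) (α : Fin m → ℂ) (s : Fin m → ℕ)
    (x0 : ℂ) (x : Fin m → Fin d → ℕ → ℂ) (n : ℕ) : ℂ :=
  x0 * prodP q P n +
    ∑ l ∈ Finset.range (n + 1), useq q d α s x (l : ℤ) * ∏ k ∈ Finset.Icc (l + 1) n, Pq q P k

/-- `v_n(x)` extended to a two-sided sequence (by `0` at negative indices; the values at
negative indices are irrelevant for the statements below). -/
def vext (q : ℚ) (P : Polynomial ℚ) {m : ℕ} (d : ℕ) (α : Fin m → ℂ) (s : Fin m → ℕ)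
    (x0 : ℂ) (x : Fin m → Fin d → ℕ → ℂ) : ℤ → ℂ :=
  fun n => if 0 ≤ n then vseq q P d α s x0 x n.toNat else 0

/-- The difference operator `D_a(ξ)(n) = ξ(n) − a·ξ(n−1)`. -/
def Dop (a : ℂ) (ξ : ℤ → ℂ) : ℤ → ℂ := fun n => ξ n - a * ξ (n - 1)

/-- The operator `∏_{j=1}^m D_{α_j·c}^{s_j}` (all the operators `D_a` commute, so the order
of composition is irrelevant). -/
def rowOp {m : ℕ} (α : Fin m → ℂ) (s : Fin m → ℕ) (c : ℂ) : (ℤ → ℂ) → (ℤ → ℂ) :=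
  (List.finRange m).foldr (fun j acc => (Dop (α j * c))^[s j] ∘ acc) id

/-- The operator `∏_{k=1}^l ∏_{j=1}^m D_{α_j q^{ν−k}}^{s_j}`. -/
def bigOp {m : ℕ} (α : Fin m → ℂ) (s : Fin m → ℕ) (q : ℂ) (ν : ℤ) (l : ℕ) :
    (ℤ → ℂ) → (ℤ → ℂ) :=
  (List.range l).foldr (fun k acc => rowOp α s (q ^ (ν - ((k : ℤ) + 1))) ∘ acc) id

/-- `v_{l,n}(x) = (∏_{k=1}^l ∏_{j=1}^m D_{α_j q^{−k}}^{s_j})(v_·(x))(n)`. -/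
def vln (q : ℚ) (P : Polynomial ℚ) {m : ℕ} (d : ℕ) (α : Fin m → ℂ) (s : Fin m → ℕ)
    (x0 : ℂ) (x : Fin m → Fin d → ℕ → ℂ) (l n : ℕ) : ℂ :=
  bigOp α s (q : ℂ) 0 l (vext q P d α s x0 x) (n : ℤ)

/-- `P(z) = p_d z^d` is a monomial. -/
def IsMonomialP (P : Polynomial ℚ) : Prop :=
  P = Polynomial.C P.leadingCoeff * Polynomial.X ^ P.natDegree

/-- `ε₀ = 1` if `P` is a monomial and `ε₀ = 0` otherwise. -/
def eps0 (P : Polynomial ℚ) : ℝ := if IsMonomialP P then 1 else 0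

/-- The quantity `M` from the theorem. -/
def Mval (d S : ℕ) (P : Polynomial ℚ) : ℝ :=
  if IsMonomialP P then
    (d * S : ℝ) + 1 / 2 + Real.sqrt ((d * S : ℝ) ^ 2 + 1 / 4)
  else (d * S : ℝ) + 1 + Real.sqrt ((d * S : ℝ) * ((d * S : ℝ) + 1))

section Aux

variable (q : ℚ) (P : Polynomial ℚ)

lemma prodP_succ (n : ℕ) : prodP q P (n+1) = prodP q P n * Pq q P (n+1) :=
  Finset.prod_range_succ _ _

lemma prodP_ne_zero (hP : ∀ n : ℕ, 1 ≤ n → P.eval (q ^ n) ≠ 0) (n : ℕ) :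
    prodP q P n ≠ 0 := by
  refine Finset.prod_ne_zero_iff.2 fun k _ => ?_
  simp only [Pq, ne_eq, Complex.ofReal_eq_zero]
  exact_mod_cast hP (k+1) (Nat.succ_le_succ (Nat.zero_le _))

lemma norm_Pq_tendsto (hq : 1 < ‖(q:ℂ)‖) (hdeg : 0 < P.degree) :
    Filter.Tendsto (fun k => ‖Pq q P k‖) Filter.atTop Filter.atTop := by
  have hmap : ∀ k : ℕ, Pq q P k = ((P.map (Rat.castHom ℂ)).eval ((q:ℂ) ^ k)) := by
    intro k
    rw [Polynomial.eval_map]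
    have : ((q:ℂ))^k = (Rat.castHom ℂ) (q ^ k) := by simp
    rw [this, Polynomial.eval₂_at_apply]
    simp [Pq]
  simp only [hmap]
  apply Polynomial.tendsto_norm_atTop
  · rwa [Polynomial.degree_map]
  · simp only [norm_pow]
    exact tendsto_pow_atTop_atTop_of_one_lt hq


open Filter in
lemma summable_aux (hq : 1 < ‖(q:ℂ)‖) (hdeg : 0 < P.degree)
    (hP : ∀ n : ℕ, 1 ≤ n → P.eval (q ^ n) ≠ 0) (e σ : ℕ) (E : ℝ) (hE : 0 ≤ E) :
    Summable (fun n : ℕ => ((n:ℝ)+1)^e * E^n / ‖prodP q P (n+σ)‖) := by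
  have hprodpos : ∀ n, 0 < ‖prodP q P n‖ :=
    fun n => norm_pos_iff.2 (prodP_ne_zero q P hP n)
  apply summable_of_ratio_norm_eventually_le (r := 1/2) (by norm_num)
  obtain ⟨N, hN⟩ := eventually_atTop.1
    ((norm_Pq_tendsto q P hq hdeg).eventually_ge_atTop (1 + 2^(e+1) * E))
  filter_upwards [eventually_ge_atTop N] with n hn
  set p1 := ‖prodP q P (n+σ)‖ with hp1
  set pq := ‖Pq q P (n+σ+1)‖ with hpqdef
  have h1 : ‖prodP q P (n+1+σ)‖ = p1 * pq := by
    rw [show n+1+σ = (n+σ)+1 by ring, prodP_succ, norm_mul]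
  have hpq : 1 + 2^(e+1) * E ≤ pq := hN _ (le_trans hn (by omega))
  have hpqpos : 0 < pq := lt_of_lt_of_le (by positivity) hpq
  have hpq2 : 2^(e+1) * E ≤ pq := le_trans (by linarith) hpq
  have hp1pos : 0 < p1 := hprodpos _
  rw [Real.norm_of_nonneg (by positivity), Real.norm_of_nonneg (by positivity), h1]
  push_cast
  have key : ((n:ℝ)+1+1)^e * E / pq ≤ 1/2 * ((n:ℝ)+1)^e := by
    rw [div_le_iff₀ hpqpos]
    calc ((n:ℝ)+1+1)^e * E ≤ (2*((n:ℝ)+1))^e * E := by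
          apply mul_le_mul_of_nonneg_right _ hE
          exact pow_le_pow_left₀ (by positivity) (by linarith) e
      _ = 1/2 * ((n:ℝ)+1)^e * (2^(e+1) * E) := by rw [mul_pow]; ring
      _ ≤ 1/2 * ((n:ℝ)+1)^e * pq := by
          apply mul_le_mul_of_nonneg_left hpq2 (by positivity)
  calc ((n:ℝ)+1+1)^e * E^(n+1) / (p1 * pq)
      = (((n:ℝ)+1+1)^e * E / pq) * (E^n / p1) := by rw [pow_succ]; ring
    _ ≤ (1/2 * ((n:ℝ)+1)^e) * (E^n / p1) := by
        apply mul_le_mul_of_nonneg_right key (by positivity)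
    _ = 1/2 * (((n:ℝ)+1)^e * E^n / p1) := by ring



def Aco (σ n : ℕ) : ℂ :=
  (∏ i ∈ Finset.range σ, ((n:ℂ) + σ - i)) / prodP q P (n+σ)

lemma norm_fall_le (σ n : ℕ) (c : ℂ) (hc : ‖c‖ ≤ (n:ℝ)) :
    ‖∏ i ∈ Finset.range σ, (c + σ - i)‖ ≤ ((2*(σ:ℝ)+1) * ((n:ℝ)+1))^σ := by
  have hfac : ∀ i ∈ Finset.range σ, ‖c + σ - i‖ ≤ (2*(σ:ℝ)+1) * ((n:ℝ)+1) := by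
    intro i hi
    have hi' : (i:ℝ) ≤ σ := by exact_mod_cast (Finset.mem_range.1 hi).le
    have h1 : ‖c + σ - i‖ ≤ ‖c‖ + ‖(σ:ℂ)‖ + ‖(i:ℂ)‖ :=
      (norm_sub_le _ _).trans (by gcongr; exact norm_add_le _ _)
    rw [Complex.norm_natCast, Complex.norm_natCast] at h1
    have hn : (0:ℝ) ≤ n := Nat.cast_nonneg n
    have hσ : (0:ℝ) ≤ σ := Nat.cast_nonneg σ
    nlinarith
  calc ‖∏ i ∈ Finset.range σ, (c + σ - i)‖
      = ∏ i ∈ Finset.range σ, ‖c + σ - i‖ := norm_prod _ _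
    _ ≤ ∏ _i ∈ Finset.range σ, ((2*(σ:ℝ)+1) * ((n:ℝ)+1)) :=
        Finset.prod_le_prod (fun _ _ => norm_nonneg _) hfac
    _ = ((2*(σ:ℝ)+1) * ((n:ℝ)+1))^σ := by
        rw [Finset.prod_const, Finset.card_range]

lemma norm_Aco_le (σ n : ℕ) :
    ‖Aco q P σ n‖ ≤ ((2*(σ:ℝ)+1) * ((n:ℝ)+1))^σ / ‖prodP q P (n+σ)‖ := by
  rw [Aco, norm_div]
  gcongr
  exact norm_fall_le σ n _ (by rw [Complex.norm_natCast])

lemma Aco_succ (σ n : ℕ) : ((n:ℂ)+1) * Aco q P σ (n+1) = Aco q P (σ+1) n := by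
  have hnum : (∏ i ∈ Finset.range (σ+1), ((n:ℂ) + ((σ+1:ℕ):ℂ) - (i:ℂ)))
      = ((n:ℂ)+1) * ∏ i ∈ Finset.range σ, (((n+1:ℕ):ℂ) + (σ:ℂ) - (i:ℂ)) := by
    rw [Finset.prod_range_succ, mul_comm]
    congr 1
    · push_cast; ring
    · refine Finset.prod_congr rfl fun i _ => by push_cast; ring
  unfold Aco
  rw [show n+1+σ = n+(σ+1) by ring, hnum, mul_div_assoc]

variable (hq : 1 < ‖(q:ℂ)‖) (hdeg : 0 < P.degree)
    (hP : ∀ n : ℕ, 1 ≤ n → P.eval (q ^ n) ≠ 0)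

include hq hdeg hP

lemma summable_Aco (σ e : ℕ) (R : ℝ) (hR : 0 ≤ R) :
    Summable (fun n : ℕ => ‖Aco q P σ n‖ * (((n:ℝ)+1)^e * R^n)) := by
  apply Summable.of_nonneg_of_le (fun n => by positivity)
    (f := fun n : ℕ => (2*(σ:ℝ)+1)^σ * (((n:ℝ)+1)^(σ+e) * R^n / ‖prodP q P (n+σ)‖))
  · intro n
    calc ‖Aco q P σ n‖ * (((n:ℝ)+1)^e * R^n)
        ≤ ((2*(σ:ℝ)+1) * ((n:ℝ)+1))^σ / ‖prodP q P (n+σ)‖ * (((n:ℝ)+1)^e * R^n) :=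
          mul_le_mul_of_nonneg_right (norm_Aco_le q P σ n) (by positivity)
      _ = (2*(σ:ℝ)+1)^σ * (((n:ℝ)+1)^(σ+e) * R^n / ‖prodP q P (n+σ)‖) := by
          rw [mul_pow]; ring
  · exact (summable_aux q P hq hdeg hP (σ+e) σ R hR).mul_left _

lemma summable_Aco_mul_pow (σ : ℕ) (z : ℂ) :
    Summable (fun n : ℕ => Aco q P σ n * z^n) := by
  apply Summable.of_norm
  apply Summable.of_nonneg_of_le (fun n => norm_nonneg _)
    (f := fun n : ℕ => ‖Aco q P σ n‖ * (((n:ℝ)+1)^0 * ‖z‖^n))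
  · intro n
    rw [norm_mul, norm_pow, pow_zero, one_mul]
  · exact summable_Aco q P hq hdeg hP σ 0 ‖z‖ (norm_nonneg z)

lemma hasDerivAt_gfun (σ : ℕ) (z : ℂ) :
    HasDerivAt (fun w => ∑' n : ℕ, Aco q P σ n * w^n)
      (∑' n : ℕ, Aco q P σ n * (n * z^(n-1))) z := by
  set R : ℝ := ‖z‖ + 1 with hR
  have hR1 : (1:ℝ) ≤ R := by rw [hR]; linarith [norm_nonneg z]
  have hderivbound : ∀ (n : ℕ) (w : ℂ), w ∈ Metric.ball (0:ℂ) R →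
      ‖Aco q P σ n * (n * w^(n-1))‖ ≤ ‖Aco q P σ n‖ * (((n:ℝ)+1)^1 * R^n) := by
    intro n w hw
    have hw' : ‖w‖ ≤ R := (mem_ball_zero_iff.1 hw).le
    rw [norm_mul]
    apply mul_le_mul_of_nonneg_left _ (norm_nonneg _)
    rw [norm_mul, norm_pow, Complex.norm_natCast, pow_one]
    have h1 : ‖w‖^(n-1) ≤ R^(n-1) := pow_le_pow_left₀ (norm_nonneg _) hw' _
    have h2 : R^(n-1) ≤ R^n := pow_le_pow_right₀ hR1 (Nat.sub_le n 1)
    exact mul_le_mul (by linarith) (h1.trans h2) (by positivity) (by positivity)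
  exact hasDerivAt_tsum_of_isPreconnected
    (summable_Aco q P hq hdeg hP σ 1 R (by linarith))
    Metric.isOpen_ball ((convex_ball (0:ℂ) R).isPreconnected)
    (fun n w _ => (hasDerivAt_pow n w).const_mul (Aco q P σ n))
    hderivbound
    (mem_ball_zero_iff.2 (by rw [norm_zero, hR]; positivity))
    (summable_Aco_mul_pow q P hq hdeg hP σ 0)
    (mem_ball_zero_iff.2 (lt_add_one _))

lemma iteratedDeriv_fC (σ : ℕ) :
    iteratedDeriv σ (fC q P) = fun z => ∑' n : ℕ, Aco q P σ n * z^n := by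
  induction σ with
  | zero =>
    funext z
    rw [iteratedDeriv_zero, fC]
    refine tsum_congr fun n => ?_
    rw [Aco, Finset.range_zero, Finset.prod_empty, Nat.add_zero, div_mul_eq_mul_div, one_mul]
  | succ σ ih =>
    funext z
    rw [iteratedDeriv_succ, ih]
    have hd := hasDerivAt_gfun q P hq hdeg hP σ z
    rw [hd.deriv]
    have hsum : Summable (fun n : ℕ => Aco q P σ n * (n * z^(n-1))) := by
      apply Summable.of_norm
      apply Summable.of_nonneg_of_le (fun n => norm_nonneg _)
        (f := fun n : ℕ => ‖Aco q P σ n‖ * (((n:ℝ)+1)^1 * (‖z‖+1)^n))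
        ?_ (summable_Aco q P hq hdeg hP σ 1 (‖z‖+1) (by positivity))
      intro n
      rw [norm_mul]
      apply mul_le_mul_of_nonneg_left _ (norm_nonneg _)
      rw [norm_mul, norm_pow, Complex.norm_natCast, pow_one]
      have h1 : ‖z‖^(n-1) ≤ (‖z‖+1)^(n-1) := pow_le_pow_left₀ (norm_nonneg _) (by linarith) _
      have h2 : (‖z‖+1)^(n-1) ≤ (‖z‖+1)^n :=
        pow_le_pow_right₀ (by linarith [norm_nonneg z]) (Nat.sub_le n 1)
      exact mul_le_mul (by linarith) (h1.trans h2) (by positivity) (by positivity)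
    rw [Summable.tsum_eq_zero_add hsum]
    simp only [Nat.cast_zero, zero_mul, mul_zero, zero_add]
    refine tsum_congr fun n => ?_
    rw [Nat.add_sub_cancel]
    push_cast
    rw [← Aco_succ q P σ n]
    ring

omit hq hdeg hP in
lemma norm_fall2_le (σ l : ℕ) :
    ‖∏ i ∈ Finset.range σ, ((l:ℂ) - (i:ℂ))‖ ≤ ((2*(σ:ℝ)+1) * ((l:ℝ)+1))^σ := by
  have hfac : ∀ i ∈ Finset.range σ, ‖(l:ℂ) - (i:ℂ)‖ ≤ (2*(σ:ℝ)+1) * ((l:ℝ)+1) := by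
    intro i hi
    have hi' : (i:ℝ) ≤ σ := by exact_mod_cast (Finset.mem_range.1 hi).le
    have h1 : ‖(l:ℂ) - (i:ℂ)‖ ≤ ‖(l:ℂ)‖ + ‖(i:ℂ)‖ := norm_sub_le _ _
    rw [Complex.norm_natCast, Complex.norm_natCast] at h1
    have hl : (0:ℝ) ≤ l := Nat.cast_nonneg l
    have hσ : (0:ℝ) ≤ σ := Nat.cast_nonneg σ
    nlinarith
  calc ‖∏ i ∈ Finset.range σ, ((l:ℂ) - (i:ℂ))‖
      = ∏ i ∈ Finset.range σ, ‖(l:ℂ) - (i:ℂ)‖ := norm_prod _ _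
    _ ≤ ∏ _i ∈ Finset.range σ, ((2*(σ:ℝ)+1) * ((l:ℝ)+1)) :=
        Finset.prod_le_prod (fun _ _ => norm_nonneg _) hfac
    _ = _ := by rw [Finset.prod_const, Finset.card_range]

lemma summable_T (σ : ℕ) (z : ℂ) (hz : z ≠ 0) :
    Summable (fun l : ℕ =>
      ‖(∏ i ∈ Finset.range σ, ((l:ℂ) - (i:ℂ))) * z^((l:ℤ) - (σ:ℤ)) / prodP q P l‖) := by
  have hzn : ‖z‖ ≠ 0 := norm_ne_zero_iff.2 hz
  have hC : (0:ℝ) ≤ ‖z‖^(-(σ:ℤ)) := zpow_nonneg (norm_nonneg z) _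
  apply Summable.of_nonneg_of_le (fun l => norm_nonneg _)
    (f := fun l : ℕ => ((2*(σ:ℝ)+1)^σ * ‖z‖^(-(σ:ℤ))) * (((l:ℝ)+1)^σ * ‖z‖^l / ‖prodP q P l‖))
  · intro l
    have hzp : ‖z^((l:ℤ) - (σ:ℤ))‖ = ‖z‖^l * ‖z‖^(-(σ:ℤ)) := by
      rw [norm_zpow, sub_eq_add_neg, zpow_add₀ hzn, zpow_natCast]
    calc ‖(∏ i ∈ Finset.range σ, ((l:ℂ) - (i:ℂ))) * z^((l:ℤ) - (σ:ℤ)) / prodP q P l‖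
        = ‖∏ i ∈ Finset.range σ, ((l:ℂ) - (i:ℂ))‖ * (‖z‖^l * ‖z‖^(-(σ:ℤ))) / ‖prodP q P l‖ := by
          rw [norm_div, norm_mul, hzp]
      _ ≤ ((2*(σ:ℝ)+1) * ((l:ℝ)+1))^σ * (‖z‖^l * ‖z‖^(-(σ:ℤ))) / ‖prodP q P l‖ := by
          gcongr
          exact norm_fall2_le σ l
      _ = ((2*(σ:ℝ)+1)^σ * ‖z‖^(-(σ:ℤ))) * (((l:ℝ)+1)^σ * ‖z‖^l / ‖prodP q P l‖) := by
          rw [mul_pow]; ring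
  · refine (((summable_aux q P hq hdeg hP σ 0 ‖z‖ (norm_nonneg z)).congr
      (fun n => by rw [Nat.add_zero])).mul_left _)

lemma tsum_T_eq (σ : ℕ) (z : ℂ) (hz : z ≠ 0) :
    ∑' l : ℕ, (∏ i ∈ Finset.range σ, ((l:ℂ) - (i:ℂ))) * z^((l:ℤ) - (σ:ℤ)) / prodP q P l
      = ∑' n : ℕ, Aco q P σ n * z^n := by
  set T : ℕ → ℂ := fun l =>
    (∏ i ∈ Finset.range σ, ((l:ℂ) - (i:ℂ))) * z^((l:ℤ) - (σ:ℤ)) / prodP q P l with hT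
  have hsumT : Summable T := Summable.of_norm (summable_T q P hq hdeg hP σ z hz)
  rw [← Summable.sum_add_tsum_nat_add σ hsumT]
  have h0 : ∑ l ∈ Finset.range σ, T l = 0 := by
    refine Finset.sum_eq_zero fun l hl => ?_
    have hz0 : (∏ i ∈ Finset.range σ, ((l:ℂ) - (i:ℂ))) = 0 :=
      Finset.prod_eq_zero hl (by simp)
    simp [hT, hz0]
  rw [h0, zero_add]
  refine tsum_congr fun n => ?_
  show (∏ i ∈ Finset.range σ, (((n+σ:ℕ):ℂ) - (i:ℂ))) * z^(((n+σ:ℕ):ℤ) - (σ:ℤ)) / prodP q P (n+σ)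
      = Aco q P σ n * z^n
  have he : ((n+σ:ℕ):ℤ) - (σ:ℤ) = (n:ℤ) := by push_cast; ring
  rw [he, zpow_natCast, Aco, div_mul_eq_mul_div]
  congr 2
  refine Finset.prod_congr rfl fun i _ => by push_cast; ring

lemma iteratedDeriv_fC_eq (σ : ℕ) (z : ℂ) (hz : z ≠ 0) :
    iteratedDeriv σ (fC q P) z
      = ∑' l : ℕ, (∏ i ∈ Finset.range σ, ((l:ℂ) - (i:ℂ))) * z^((l:ℤ) - (σ:ℤ)) / prodP q P l := by
  rw [iteratedDeriv_fC q P hq hdeg hP σ, tsum_T_eq q P hq hdeg hP σ z hz]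

end Aux

/-- the tail representation
`v_n(ω) = −∑_{l=n+1}^∞ u_l(ω)/∏_{k=n+1}^l P(q^k)` (indexing the tail by `l = n+1+t`). -/
theorem stmt_16
    (q₁ q₂ : ℤ) (hq₁ : q₁ ≠ 0) (hq₂ : q₂ ≠ 0) (hcop : Int.gcd q₁ q₂ = 1)
    (habs : |q₂| < |q₁|)
    (q : ℚ) (hq : q = (q₁ : ℚ) / (q₂ : ℚ))
    (P : Polynomial ℚ) (d : ℕ) (hd : d = P.natDegree) (hd1 : 1 ≤ d)
    (hP : ∀ n : ℕ, 1 ≤ n → P.eval (q ^ n) ≠ 0)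
    (m : ℕ) (α : Fin m → ℂ) (hα : ∀ j, α j ≠ 0)
    (s : Fin m → ℕ) (hs : ∀ j, 0 < s j)
    (S : ℕ) (hS : S = ∑ j, s j)
    (ω0 : ℂ) (ω : Fin m → Fin d → ℕ → ℂ)
    (hzero : ω0 + ∑ j : Fin m, ∑ k : Fin d, ∑ σ ∈ Finset.range (s j),
        ω j k σ * iteratedDeriv σ (fC q P) (α j * (q : ℂ) ^ (k : ℕ)) = 0) :
    ∀ n : ℕ,
      Summable (fun t : ℕ =>
        ‖useq q d α s ω ((n : ℤ) + 1 + t) / ∏ k ∈ Finset.Icc (n + 1) (n + 1 + t), Pq q P k‖) ∧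
      vseq q P d α s ω0 ω n
        = - ∑' t : ℕ,
            useq q d α s ω ((n : ℤ) + 1 + t) / ∏ k ∈ Finset.Icc (n + 1) (n + 1 + t), Pq q P k := by
  -- preliminary facts
  have h2 : (1:ℚ) < |q| := by
    have hq2Q : ((q₂:ℚ)) ≠ 0 := by exact_mod_cast hq₂
    rw [hq, abs_div, lt_div_iff₀ (abs_pos.2 hq2Q), one_mul]
    exact_mod_cast habs
  have hq0 : q ≠ 0 := by
    intro h; rw [h] at h2; norm_num at h2
  have hq1 : 1 < ‖(q:ℂ)‖ := by
    rw [Complex.norm_ratCast]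
    exact_mod_cast h2
  have hdeg : 0 < P.degree :=
    Polynomial.natDegree_pos_iff_degree_pos.1 (by omega)
  have hprodne : ∀ t, prodP q P t ≠ 0 := prodP_ne_zero q P hP
  have hzne : ∀ (j : Fin m) (k : Fin d), α j * (q:ℂ)^(k:ℕ) ≠ 0 := fun j k =>
    mul_ne_zero (hα j) (pow_ne_zero _ (Rat.cast_ne_zero.2 hq0))
  set F : Fin m → Fin d → ℕ → ℕ → ℂ := fun j k σ l =>
    (∏ i ∈ Finset.range σ, ((l:ℂ) - (i:ℂ))) * (α j * (q:ℂ)^(k:ℕ))^((l:ℤ) - (σ:ℤ)) * ω j k σ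
      / prodP q P l with hF
  have hFsum : ∀ j k σ, Summable (F j k σ) := by
    intro j k σ
    have h := Summable.of_norm (summable_T q P hq1 hdeg hP σ _ (hzne j k))
    exact (h.mul_right (ω j k σ)).congr (fun l => by rw [hF]; ring)
  have hu : ∀ l : ℕ, useq q d α s ω (l:ℤ) / prodP q P l
      = ∑ j, ∑ k, ∑ σ ∈ Finset.range (s j), F j k σ l := by
    intro l
    rw [useq, Finset.sum_div]
    refine Finset.sum_congr rfl fun j _ => ?_
    rw [Finset.sum_div]
    refine Finset.sum_congr rfl fun k _ => ?_
    rw [Finset.sum_div]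
    refine Finset.sum_congr rfl fun σ _ => ?_
    rw [hF]
    push_cast
    ring
  have hUsum : Summable (fun l : ℕ => useq q d α s ω (l:ℤ) / prodP q P l) :=
    (summable_sum fun j _ => summable_sum fun k _ =>
      summable_sum fun σ _ => hFsum j k (σ : ℕ)).congr fun l => (hu l).symm
  have hfull : ∑' l : ℕ, useq q d α s ω (l:ℤ) / prodP q P l = -ω0 := by
    have h1 : ∀ (j : Fin m) (k : Fin d) (σ : ℕ),
        ω j k σ * iteratedDeriv σ (fC q P) (α j * (q:ℂ)^(k:ℕ)) = ∑' l : ℕ, F j k σ l := by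
      intro j k σ
      rw [iteratedDeriv_fC_eq q P hq1 hdeg hP σ _ (hzne j k), ← tsum_mul_left]
      exact tsum_congr fun l => by rw [hF]; ring
    have h2' : ∑ j, ∑ k, ∑ σ ∈ Finset.range (s j),
        ω j k σ * iteratedDeriv σ (fC q P) (α j * (q:ℂ)^(k:ℕ))
        = ∑' l : ℕ, useq q d α s ω (l:ℤ) / prodP q P l := by
      calc ∑ j, ∑ k, ∑ σ ∈ Finset.range (s j),
            ω j k σ * iteratedDeriv σ (fC q P) (α j * (q:ℂ)^(k:ℕ))
          = ∑ j, ∑ k, ∑ σ ∈ Finset.range (s j), ∑' l : ℕ, F j k σ l :=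
            Finset.sum_congr rfl fun j _ => Finset.sum_congr rfl fun k _ =>
              Finset.sum_congr rfl fun σ _ => h1 j k σ
        _ = ∑ j, ∑ k, ∑' l : ℕ, ∑ σ ∈ Finset.range (s j), F j k σ l :=
            Finset.sum_congr rfl fun j _ => Finset.sum_congr rfl fun k _ =>
              (Summable.tsum_finsetSum fun σ _ => hFsum j k σ).symm
        _ = ∑ j, ∑' l : ℕ, ∑ k, ∑ σ ∈ Finset.range (s j), F j k σ l :=
            Finset.sum_congr rfl fun j _ =>
              (Summable.tsum_finsetSum fun k _ => summable_sum fun σ _ => hFsum j k σ).symm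
        _ = ∑' l : ℕ, ∑ j, ∑ k, ∑ σ ∈ Finset.range (s j), F j k σ l :=
            (Summable.tsum_finsetSum fun j _ => summable_sum fun k _ =>
              summable_sum fun σ _ => hFsum j k σ).symm
        _ = _ := tsum_congr fun l => (hu l).symm
    rw [h2'] at hzero
    exact eq_neg_of_add_eq_zero_right hzero
  have hUnorm : Summable (fun l : ℕ => ‖useq q d α s ω (l:ℤ) / prodP q P l‖) :=
    summable_norm_iff.mpr hUsum
  have hprodIoc : ∀ t : ℕ, prodP q P t = ∏ k ∈ Finset.Ioc 0 t, Pq q P k := by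
    intro t; induction t with
    | zero => simp [prodP]
    | succ t ih => rw [prodP_succ, ih, Finset.prod_Ioc_succ_top (Nat.zero_le _)]
  have hsplit : ∀ a b : ℕ, a ≤ b →
      prodP q P b = prodP q P a * ∏ k ∈ Finset.Icc (a+1) b, Pq q P k := by
    intro a b hab
    rw [hprodIoc, hprodIoc, Finset.Icc_add_one_left_eq_Ioc, ← Finset.prod_Ioc_consecutive _ (Nat.zero_le a) hab]
  have hIccne : ∀ a b : ℕ, (∏ k ∈ Finset.Icc (a+1) b, Pq q P k) ≠ 0 := by
    intro a b
    refine Finset.prod_ne_zero_iff.2 fun k hk => ?_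
    have hk1 : 1 ≤ k := by have := (Finset.mem_Icc.1 hk).1; omega
    simp only [Pq, ne_eq, Complex.ofReal_eq_zero]
    exact_mod_cast hP k hk1
  intro n
  have hterm : ∀ t : ℕ, useq q d α s ω ((n:ℤ)+1+(t:ℤ)) / ∏ k ∈ Finset.Icc (n+1) (n+1+t), Pq q P k
      = (useq q d α s ω ((t+(n+1):ℕ):ℤ) / prodP q P (t+(n+1))) * prodP q P n := by
    intro t
    have hcast : ((t+(n+1):ℕ):ℤ) = (n:ℤ)+1+(t:ℤ) := by push_cast; ring
    rw [hcast, show n+1+t = t+(n+1) from by omega]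
    have h1 : prodP q P (t+(n+1)) = prodP q P n * ∏ k ∈ Finset.Icc (n+1) (t+(n+1)), Pq q P k :=
      hsplit n (t+(n+1)) (by omega)
    rw [h1]
    have hA : prodP q P n ≠ 0 := hprodne n
    have hB : (∏ k ∈ Finset.Icc (n+1) (t+(n+1)), Pq q P k) ≠ 0 := hIccne n (t+(n+1))
    field_simp
  constructor
  · refine Summable.congr
      ((((summable_nat_add_iff (n+1)).2 hUnorm)).mul_right ‖prodP q P n‖) fun t => ?_
    rw [← norm_mul, ← hterm t]
  · have hsplitsum := Summable.sum_add_tsum_nat_add (n+1) hUsum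
    rw [hfull] at hsplitsum
    have hpartial : ∑ l ∈ Finset.range (n+1), useq q d α s ω (l:ℤ) / prodP q P l
        = -ω0 - ∑' t : ℕ, useq q d α s ω ((t+(n+1):ℕ):ℤ) / prodP q P (t+(n+1)) :=
      eq_sub_of_add_eq hsplitsum
    have hv : vseq q P d α s ω0 ω n
        = prodP q P n * (ω0 + ∑ l ∈ Finset.range (n+1), useq q d α s ω (l:ℤ) / prodP q P l) := by
      rw [vseq, mul_add, mul_comm (prodP q P n) ω0, Finset.mul_sum]
      congr 1
      refine Finset.sum_congr rfl fun l hl => ?_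
      have hl' : l ≤ n := by have := Finset.mem_range.1 hl; omega
      rw [hsplit l n hl']
      have hA : prodP q P l ≠ 0 := hprodne l
      field_simp
    rw [hv, hpartial]
    have hG : ∑' t : ℕ, useq q d α s ω ((n:ℤ)+1+(t:ℤ))
          / ∏ k ∈ Finset.Icc (n+1) (n+1+t), Pq q P k
        = (∑' t : ℕ, useq q d α s ω ((t+(n+1):ℕ):ℤ) / prodP q P (t+(n+1))) * prodP q P n := by
      rw [tsum_congr hterm, tsum_mul_right]
    rw [hG]
    ring
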